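/- In the BNPG constructed from the Red-Blue Dominating Set reduction (bipartite graph G=(B⊎R,E) plus apex v* adjacent to all of B; red players have g(0)=0, g(x)=1 for x≥1, cost 1; blue players have g(0)=1, g(1)=2, g(x)=0 for x≥2, cost 1; v* has g(x)=1 for x≤κ and 0 otherwise, cost 1), every profile s with ESW(s) ≥ 1 satisfies s ⊆ B: no red player and not v* invests in s. -/

import Mathlib

attribute [local instance] Classical.propDecidable

noncomputable section

variable {V : Type*}

/-- Number of investing closed neighbors of `v` under profile `s`. -/
def cNbr (G : SimpleGraph V) (s : Finset V) (v : V) : ℕ :=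
  (s.filter fun u => G.Adj v u ∨ u = v).card

/-- Payoff of player `v` under profile `s` in the BNPG on `G` with
externality functions `g` and costs `c`. -/
def payoff (G : SimpleGraph V) (g : V → ℕ → ℝ) (c : V → ℝ) (s : Finset V) (v : V) : ℝ :=
  g v (cNbr G s v) - (if v ∈ s then c v else 0)

/-- The profile obtained from `s` by flipping the action of `v`. -/
def flipProfile (s : Finset V) (v : V) : Finset V :=
  if v ∈ s then s.erase v else insert v s

/-- Pure-strategy Nash equilibrium: nobody gains by flipping her own action. -/
def IsPSNE (G : SimpleGraph V) (g : V → ℕ → ℝ) (c : V → ℝ) (s : Finset V) : Prop :=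
  ∀ v, payoff G g c (flipProfile s v) v ≤ payoff G g c s v

/-- Utilitarian social welfare. -/
def USW (G : SimpleGraph V) [Fintype V] (g : V → ℕ → ℝ) (c : V → ℝ) (s : Finset V) : ℝ :=
  ∑ v, payoff G g c s v

/-- Egalitarian social welfare: the minimum payoff of a player. -/
def ESW (G : SimpleGraph V) (g : V → ℕ → ℝ) (c : V → ℝ) (s : Finset V) : ℝ :=
  ⨅ v, payoff G g c s v

variable {B R : Type*} [Fintype B] [Fintype R]

/-- Players of the RBDS reduction: blue players, red players, and the apex v*. -/
abbrev RBPlayers (B R : Type*) := B ⊕ (R ⊕ Unit)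

/-- One-directional adjacency of the RBDS reduction network, for a bipartite graph
with edge relation E between B and R. -/
def rbRel (E : B → R → Prop) : RBPlayers B R → RBPlayers B R → Prop
  | Sum.inl b, Sum.inr (Sum.inl r) => E b r
  | Sum.inl _, Sum.inr (Sum.inr _) => True
  | _, _ => False

/-- The RBDS reduction network: G together with v* adjacent to all of B. -/
def rbNet (E : B → R → Prop) : SimpleGraph (RBPlayers B R) where
  Adj a b := rbRel E a b ∨ rbRel E b a
  symm := by
    constructor
    intro _ _ h
    exact h.symm
  loopless := by
    constructor
    intro a h
    rcases h with h | h <;> rcases a with b | r | u <;> exact h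

/-- Externality functions of the RBDS reduction. -/
def rbG (κ : ℕ) : RBPlayers B R → ℕ → ℝ
  | Sum.inl _, x => if x = 0 then 1 else if x = 1 then 2 else 0
  | Sum.inr (Sum.inl _), x => if x = 0 then 0 else 1
  | Sum.inr (Sum.inr _), x => if x ≤ κ then 1 else 0

theorem ESW_le_payoff [Finite V] (G : SimpleGraph V) (g : V → ℕ → ℝ) (c : V → ℝ)
    (s : Finset V) (v : V) : ESW G g c s ≤ payoff G g c s v :=
  ciInf_le (Set.finite_range _).bddBelow v

theorem payoff_le_sub_of_mem (G : SimpleGraph V) {g : V → ℕ → ℝ} (c : V → ℝ) {s : Finset V}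
    {v : V} {M : ℝ} (hg : ∀ x, g v x ≤ M) (hv : v ∈ s) : payoff G g c s v ≤ M - c v := by
  rw [payoff, if_pos hv]
  exact sub_le_sub_right (hg _) _

/-- every profile with egalitarian social welfare at least 1 contains only
blue players: no red player and not v* invests. -/
theorem stmt_7 (E : B → R → Prop) (κ : ℕ)
    (s : Finset (RBPlayers B R)) (hs : 1 ≤ ESW (rbNet E) (rbG κ) (fun _ => 1) s) :
    ∀ v ∈ s, ∃ b : B, v = Sum.inl b := by
  rintro (b | w) hv
  · exact ⟨b, rfl⟩
  · have hg : ∀ x, rbG (B := B) κ (Sum.inr w) x ≤ 1 := by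
      rcases w with _ | _ <;> intro x <;> simp only [rbG] <;> split_ifs <;> norm_num
    have hpayoff := (ESW_le_payoff _ _ _ s _).trans
      (payoff_le_sub_of_mem (rbNet E) (fun _ => 1) hg hv)
    linarith

end
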